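/- Let β and G^r_β be as in the definition of sub-resonant polynomial transformations. Then every element P ∈ G^r_β is an invertible map of ℂⁿ, and P⁻¹ ∈ G^r_β. Hence G^r_β is a subgroup of Aut(ℂⁿ). -/

import Mathlib

open Finset

noncomputable section

/-- `bpow β p = ∏ᵢ βᵢ ^ pᵢ`. -/
def bpow {n : ℕ} (β : Fin n → ℂ) (p : Fin n → ℕ) : ℂ := ∏ i, β i ^ p i

/-- `𝒫ⱼ`: the set of resonances of `βⱼ`, i.e. `p ∈ ℕⁿ` with `βⱼ = β^p` and
`p ≠ eₖ` for all `k ≥ j`. -/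
def resSet {n : ℕ} (β : Fin n → ℂ) (j : Fin n) : Set (Fin n → ℕ) :=
  {p | β j = bpow β p ∧ ∀ k : Fin n, j ≤ k → p ≠ fun i => if i = k then 1 else 0}

/-- `𝒬ⱼ`: the set of nonzero multi-indices componentwise bounded by some
resonance of `βⱼ`. -/
def subResSet {n : ℕ} (β : Fin n → ℂ) (j : Fin n) : Set (Fin n → ℕ) :=
  {q | q ≠ 0 ∧ ∃ p ∈ resSet β j, ∀ l, q l ≤ p l}

/-- A map `P : ℂⁿ → ℂⁿ` is β sub-resonant if
`P(z) = (a₁z₁, a₂z₂ + P₂(z₁), ..., aₙzₙ + Pₙ(z₁,...,z_{n-1}))` with all `aⱼ ≠ 0`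
and each `Pⱼ` a linear combination of monomials `z^q` with `q ∈ 𝒬ⱼ` depending
only on the variables `z₁, ..., z_{j-1}`. -/
def IsSubResonant {n : ℕ} (β : Fin n → ℂ) (P : (Fin n → ℂ) → (Fin n → ℂ)) : Prop :=
  ∃ (a : Fin n → ℂ) (c : Fin n → ((Fin n → ℕ) →₀ ℂ)),
    (∀ j, a j ≠ 0) ∧
    (∀ j q, c j q ≠ 0 → q ∈ subResSet β j ∧ ∀ i, j ≤ i → q i = 0) ∧
    ∀ (z : Fin n → ℂ) (j : Fin n),
      P z j = a j * z j + (c j).sum fun q coef => coef * ∏ i, z i ^ q i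

/-!
Write `P(z)ⱼ = aⱼ zⱼ + fⱼ(z₁, …, z_{j-1})`. The inverse is found by solving triangularly,
`Q(w)ⱼ = aⱼ⁻¹ (wⱼ - fⱼ(Q(w)))`; at the level of polynomials this is a fixed point of a strictly
triangular operator, reached after `n` iterations starting from the identity.

The monomials of `Q` arise by substituting into sub-resonant monomials `z^q` of `fⱼ` polynomials
whose monomials are `zᵢ` or sub-resonant for `i`. Replacing a factor `zᵢ` of `z^q` by `z^d` with
`β^d ∣ βᵢ` (divisibility among the monomials in `β`) keeps `β^q ∣ βⱼ`, so the monomials stay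
sub-resonant for `j`.
-/

open AddMonoidAlgebra Function

namespace SubResonant

section Polynomial

variable {k σ A : Type*} [CommSemiring k] [Fintype σ]

def monomialHom [CommMonoid A] (g : σ → A) : Multiplicative (σ → ℕ) →* A where
  toFun q := ∏ i, g i ^ q.toAdd i
  map_one' := by simp
  map_mul' p q := by simp [pow_add, prod_mul_distrib]

def aeval [CommSemiring A] [Algebra k A] (g : σ → A) : k[σ → ℕ] →ₐ[k] A :=
  lift k A (σ → ℕ) (monomialHom g)

def X [DecidableEq σ] (j : σ) : k[σ → ℕ] := single (Pi.single j 1) 1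

variable [CommSemiring A] [Algebra k A]

theorem aeval_apply (g : σ → A) (f : k[σ → ℕ]) :
    aeval g f = f.coeff.sum fun q r => r • ∏ i, g i ^ q i :=
  lift_apply _ f

theorem aeval_single (g : σ → A) (q : σ → ℕ) (r : k) :
    aeval g (single q r) = r • ∏ i, g i ^ q i :=
  lift_single _ q r

theorem aeval_X [DecidableEq σ] (g : σ → A) (j : σ) : aeval g (X j : k[σ → ℕ]) = g j := by
  simp [X, aeval_single, Pi.single_apply]

omit [Fintype σ] in
theorem support_coeff_X [DecidableEq σ] [Nontrivial k] (j : σ) :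
    (X j : k[σ → ℕ]).coeff.support = {Pi.single j 1} :=
  Finsupp.support_single _ one_ne_zero

theorem aeval_aeval (z : σ → A) (g : σ → k[σ → ℕ]) (f : k[σ → ℕ]) :
    aeval z (aeval g f) = aeval (fun i => aeval z (g i)) f := by
  simp only [aeval_apply, map_finsuppSum, map_smul, map_prod, map_pow]

theorem aeval_congr {g g' : σ → A} {f : k[σ → ℕ]}
    (h : ∀ q ∈ f.coeff.support, ∀ i, q i ≠ 0 → g i = g' i) : aeval g f = aeval g' f := by
  simp only [aeval_apply]
  refine Finsupp.sum_congr fun q hq => congrArg _ (prod_congr rfl fun i _ => ?_)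
  by_cases hqi : q i = 0
  · simp [hqi]
  · rw [h q hq i hqi]

end Polynomial

section Support

variable {k σ : Type*} [CommSemiring k] [Fintype σ] (M : AddSubmonoid ((σ → ℕ) × (σ → ℕ)))

def pairSubmonoid : Submonoid (Multiplicative (σ → ℕ) × k[σ → ℕ]) where
  carrier := {x | ∀ d ∈ x.2.coeff.support, (x.1.toAdd, d) ∈ M}
  one_mem' d hd := by
    obtain rfl : d = 0 := by simpa using support_coeff_one_subset hd
    exact M.zero_mem
  mul_mem' {x y} hx hy d hd := by
    classical
    obtain ⟨d₁, hd₁, d₂, hd₂, rfl⟩ := Finset.mem_add.mp (support_coeff_mul_subset _ _ hd)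
    exact M.add_mem (hx d₁ hd₁) (hy d₂ hd₂)

def IsAdmissibleSubst [DecidableEq σ] (g : σ → k[σ → ℕ]) : Prop :=
  ∀ i, ∀ d ∈ (g i).coeff.support, (Pi.single i 1, d) ∈ M

theorem mem_pairSubmonoid {x : Multiplicative (σ → ℕ) × k[σ → ℕ]} :
    x ∈ pairSubmonoid M ↔ ∀ d ∈ x.2.coeff.support, (x.1.toAdd, d) ∈ M :=
  Iff.rfl

theorem mem_of_mem_support_prod_pow [DecidableEq σ] {g : σ → k[σ → ℕ]}
    (hg : IsAdmissibleSubst M g) (q : σ → ℕ) :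
    ∀ d ∈ (∏ i, g i ^ q i).coeff.support, (q, d) ∈ M := by
  have hmem : ∏ i, (Multiplicative.ofAdd (Pi.single i 1 : σ → ℕ), g i) ^ q i ∈ pairSubmonoid M :=
    Submonoid.prod_mem _ fun i _ => Submonoid.pow_mem _ ((mem_pairSubmonoid M).2 (hg i)) _
  have hq : ∑ i, q i • (Pi.single i 1 : σ → ℕ) = q := by
    conv_rhs => rw [← Finset.univ_sum_single q]
    simp [← Pi.single_smul]
  simpa only [mem_pairSubmonoid, Prod.fst_prod, Prod.snd_prod, Prod.pow_fst, Prod.pow_snd,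
    toAdd_prod, toAdd_pow, toAdd_ofAdd, hq] using hmem

theorem exists_mem_of_mem_support_aeval [DecidableEq σ] {g : σ → k[σ → ℕ]}
    (hg : IsAdmissibleSubst M g) {f : k[σ → ℕ]} {d : σ → ℕ}
    (hd : d ∈ (aeval g f).coeff.support) : ∃ q ∈ f.coeff.support, (q, d) ∈ M := by
  rw [aeval_apply, coeff_finsuppSum] at hd
  obtain ⟨q, hq, hdq⟩ := Finset.mem_biUnion.mp (Finsupp.support_finsetSum hd)
  exact ⟨q, hq, mem_of_mem_support_prod_pow M hg q d (Finsupp.support_smul hdq)⟩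

end Support

section Triangular

variable {n : ℕ} {α : Type*}

def StrictlyTriangular (T : (Fin n → α) → Fin n → α) : Prop :=
  ∀ g g' j, (∀ i < j, g i = g' i) → T g j = T g' j

variable {T : (Fin n → α) → Fin n → α}

theorem StrictlyTriangular.isFixedPt_iterate (hT : StrictlyTriangular T) (g : Fin n → α) :
    IsFixedPt T (T^[n] g) := by
  have stable : ∀ m, ∀ j : Fin n, (j : ℕ) < m → T^[m + 1] g j = T^[m] g j := by
    intro m
    induction m with
    | zero => exact fun j hj => absurd hj (Nat.not_lt_zero _)
    | succ m ih =>
      intro j hj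
      calc T^[m + 2] g j = T (T^[m + 1] g) j := by rw [iterate_succ_apply']
        _ = T (T^[m] g) j := hT _ _ j fun i hi => ih i (by omega)
        _ = T^[m + 1] g j := by rw [iterate_succ_apply']
  funext j
  rw [← iterate_succ_apply' T n]
  exact stable n j j.isLt

theorem StrictlyTriangular.eq_of_isFixedPt (hT : StrictlyTriangular T) {g g' : Fin n → α}
    (hg : IsFixedPt T g) (hg' : IsFixedPt T g') : g = g' := by
  funext j
  induction j using WellFoundedLT.induction with
  | _ j ih =>
    calc g j = T g j := (congrFun hg j).symm
      _ = T g' j := hT g g' j ih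
      _ = g' j := congrFun hg' j

end Triangular

section Exponents

variable {n : ℕ} (β : Fin n → ℂ)

theorem bpow_add (p q : Fin n → ℕ) : bpow β (p + q) = bpow β p * bpow β q := by
  simp [bpow, pow_add, prod_mul_distrib]

theorem bpow_single (j : Fin n) : bpow β (Pi.single j 1) = β j := by
  simp [bpow, Pi.single_apply]

def IsSubResExponent (j : Fin n) (q : Fin n → ℕ) : Prop :=
  q ∈ subResSet β j ∧ ∀ i, j ≤ i → q i = 0

variable {β}

/-- The condition `p ≠ eₖ (k ≥ j)` in `resSet` is automatic here, since `q ≤ p` is nonzero and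
only involves variables before `j`. -/
theorem isSubResExponent_iff {j : Fin n} {q : Fin n → ℕ} :
    IsSubResExponent β j q ↔
      q ≠ 0 ∧ (∀ i, j ≤ i → q i = 0) ∧ ∃ r, bpow β (q + r) = β j := by
  constructor
  · rintro ⟨⟨hq, p, ⟨hp, -⟩, hqp⟩, hlow⟩
    refine ⟨hq, hlow, p - q, ?_⟩
    rw [add_tsub_cancel_of_le hqp, hp]
  · rintro ⟨hq, hlow, r, hr⟩
    refine ⟨⟨hq, q + r, ⟨hr.symm, fun k hk hqr => hq (funext fun l => ?_)⟩,
      fun l => Nat.le_add_right _ _⟩, hlow⟩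
    have hl := congrFun hqr l
    by_cases hlk : l = k
    · exact hlk ▸ hlow k hk
    · simp only [Pi.add_apply, hlk, if_false] at hl
      simp only [Pi.zero_apply]
      omega

variable (β)

/-- `(q, d) ∈ substExps β` holds whenever `z ^ d` occurs in `z ^ q` after substituting for each
`zᵢ` a polynomial whose monomials are `zᵢ` or sub-resonant for `i`: `β ^ d` divides `β ^ q`
in the monoid of monomials in `β`, `d` is nonconstant if `q` is, and `d` involves no variable
after the last variable of `q`. -/
def substExps : AddSubmonoid ((Fin n → ℕ) × (Fin n → ℕ)) where
  carrier := {x | (∃ r, bpow β (x.2 + r) = bpow β x.1) ∧ (x.2 = 0 → x.1 = 0) ∧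
    ∀ j : Fin n, (∀ i, j ≤ i → x.1 i = 0) → ∀ i, j ≤ i → x.2 i = 0}
  zero_mem' := ⟨⟨0, rfl⟩, fun _ => rfl, fun _ _ i _ => rfl⟩
  add_mem' := by
    rintro ⟨q, d⟩ ⟨q', d'⟩ ⟨⟨r, hr⟩, hd, hlow⟩ ⟨⟨r', hr'⟩, hd', hlow'⟩
    dsimp only [Prod.mk_add_mk] at hr hd hlow hr' hd' hlow' ⊢
    refine ⟨⟨r + r', ?_⟩, fun h => ?_, fun j hj i hi => ?_⟩
    · rw [add_add_add_comm, bpow_add, hr, hr', bpow_add]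
    · obtain ⟨h₁, h₂⟩ := add_eq_zero.1 h
      rw [hd h₁, hd' h₂, add_zero]
    · have hj' : ∀ l, j ≤ l → q l = 0 ∧ q' l = 0 := fun l hl => by simpa using hj l hl
      simp [hlow j (fun l hl => (hj' l hl).1) i hi, hlow' j (fun l hl => (hj' l hl).2) i hi]

variable {β}

theorem self_mem_substExps (q : Fin n → ℕ) : (q, q) ∈ substExps β :=
  ⟨⟨0, by rw [add_zero]⟩, id, fun _ h => h⟩

theorem IsSubResExponent.single_mem_substExps {j : Fin n} {d : Fin n → ℕ}
    (hd : IsSubResExponent β j d) : (Pi.single j 1, d) ∈ substExps β := by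
  obtain ⟨hd0, hlow, r, hr⟩ := isSubResExponent_iff.1 hd
  refine ⟨⟨r, by rw [hr, bpow_single]⟩, fun h => absurd h hd0, fun k hk i hki => ?_⟩
  have hjk : j < k := by
    by_contra! hkj
    simpa using hk j hkj
  exact hlow i (hjk.le.trans hki)

theorem IsSubResExponent.of_mem_substExps {j : Fin n} {q d : Fin n → ℕ}
    (hq : IsSubResExponent β j q) (hqd : (q, d) ∈ substExps β) : IsSubResExponent β j d := by
  obtain ⟨hq0, hlow, r, hr⟩ := isSubResExponent_iff.1 hq
  obtain ⟨⟨s, hs⟩, hd0, hdlow⟩ := hqd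
  refine isSubResExponent_iff.2 ⟨fun h => hq0 (hd0 h), hdlow j hlow, s + r, ?_⟩
  rw [← add_assoc, bpow_add, hs, ← bpow_add, hr]

end Exponents

section Inverse

variable {k : Type*} [Field k] {n : ℕ} (a : Fin n → k) (c : Fin n → k[Fin n → ℕ])

def triangularMap (z : Fin n → k) (j : Fin n) : k := a j * z j + aeval z (c j)

def inverseStep (g : Fin n → k[Fin n → ℕ]) (j : Fin n) : k[Fin n → ℕ] :=
  (a j)⁻¹ • (X j - aeval g (c j))

def inversePoly : Fin n → k[Fin n → ℕ] := (inverseStep a c)^[n] X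

def inverseMap (w : Fin n → k) (j : Fin n) : k := aeval w (inversePoly a c j)

def solveStep (w z : Fin n → k) (j : Fin n) : k := (a j)⁻¹ * (w j - aeval z (c j))

def IsLowerTriangular : Prop := ∀ j, ∀ q ∈ (c j).coeff.support, ∀ i, j ≤ i → q i = 0

variable {a c}

section LowerTriangular

variable {A : Type*} [CommSemiring A] [Algebra k A] (hc : IsLowerTriangular c)
include hc

theorem aeval_eq_of_eq_on_lt {g g' : Fin n → A} {j : Fin n} (h : ∀ i < j, g i = g' i) :
    aeval g (c j) = aeval g' (c j) :=
  aeval_congr fun q hq i hqi => h i (not_le.1 fun hji => hqi (hc j q hq i hji))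

variable (a) in
theorem strictlyTriangular_inverseStep : StrictlyTriangular (inverseStep a c) :=
  fun _ _ j h => by rw [inverseStep, inverseStep, aeval_eq_of_eq_on_lt hc h]

variable (a) in
theorem strictlyTriangular_solveStep (w : Fin n → k) : StrictlyTriangular (solveStep a c w) :=
  fun _ _ j h => by rw [solveStep, solveStep, aeval_eq_of_eq_on_lt hc h]

theorem isFixedPt_inversePoly : IsFixedPt (inverseStep a c) (inversePoly a c) :=
  (strictlyTriangular_inverseStep a hc).isFixedPt_iterate X

end LowerTriangular

theorem inverseMap_apply (hc : IsLowerTriangular c)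
    (w : Fin n → k) (j : Fin n) :
    inverseMap a c w j = (a j)⁻¹ * (w j - aeval (inverseMap a c w) (c j)) := by
  conv_lhs => rw [inverseMap, ← isFixedPt_inversePoly hc]
  rw [inverseStep, map_smul, map_sub, aeval_X, aeval_aeval, smul_eq_mul]
  rfl

theorem triangularMap_inverseMap (ha : ∀ j, a j ≠ 0)
    (hc : IsLowerTriangular c) (w : Fin n → k) :
    triangularMap a c (inverseMap a c w) = w := by
  funext j
  rw [triangularMap, inverseMap_apply hc, mul_inv_cancel_left₀ (ha j), sub_add_cancel]

theorem inverseMap_triangularMap (ha : ∀ j, a j ≠ 0)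
    (hc : IsLowerTriangular c) (z : Fin n → k) :
    inverseMap a c (triangularMap a c z) = z := by
  refine (strictlyTriangular_solveStep a hc (triangularMap a c z)).eq_of_isFixedPt ?_ ?_
  · funext j
    exact (inverseMap_apply hc _ j).symm
  · funext j
    rw [solveStep, triangularMap, add_sub_cancel_right, inv_mul_cancel_left₀ (ha j)]

theorem inverseMap_eq_triangularMap (hc : IsLowerTriangular c) :
    inverseMap a c =
      triangularMap (fun j => (a j)⁻¹) fun j => -(a j)⁻¹ • aeval (inversePoly a c) (c j) := by
  funext w j
  rw [inverseMap_apply hc, triangularMap, map_smul, aeval_aeval, smul_eq_mul, mul_sub, neg_mul,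
    ← sub_eq_add_neg]
  rfl

end Inverse

section SubResonantInverse

variable {n : ℕ} {β : Fin n → ℂ}

theorem isSubResExponent_of_mem_support_aeval {g : Fin n → ℂ[Fin n → ℕ]}
    (hg : IsAdmissibleSubst (substExps β) g) {j : Fin n}
    {f : ℂ[Fin n → ℕ]} (hf : ∀ q ∈ f.coeff.support, IsSubResExponent β j q) {d : Fin n → ℕ}
    (hd : d ∈ (aeval g f).coeff.support) : IsSubResExponent β j d := by
  obtain ⟨q, hq, hqd⟩ := exists_mem_of_mem_support_aeval _ hg hd
  exact (hf q hq).of_mem_substExps hqd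

theorem isAdmissibleSubst_inversePoly {a : Fin n → ℂ}
    {c : Fin n → ℂ[Fin n → ℕ]} (hc : ∀ j, ∀ q ∈ (c j).coeff.support, IsSubResExponent β j q) :
    IsAdmissibleSubst (substExps β) (inversePoly a c) := by
  have hX : IsAdmissibleSubst (substExps β) (X : Fin n → ℂ[Fin n → ℕ]) := by
    intro i d hd
    rw [support_coeff_X, Finset.mem_singleton] at hd
    exact hd ▸ self_mem_substExps _
  refine Function.Iterate.rec (IsAdmissibleSubst (substExps β)) hX (fun g hg j d hd => ?_) n
  rw [inverseStep, coeff_smul, coeff_sub] at hd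
  rcases Finset.mem_union.1 (Finsupp.support_sub (Finsupp.support_smul hd)) with hd | hd
  · exact hX j d hd
  · exact (isSubResExponent_of_mem_support_aeval hg (hc j) hd).single_mem_substExps

theorem isSubResonant_iff {P : (Fin n → ℂ) → Fin n → ℂ} :
    IsSubResonant β P ↔ ∃ (a : Fin n → ℂ) (c : Fin n → ℂ[Fin n → ℕ]), (∀ j, a j ≠ 0) ∧
      (∀ j, ∀ q ∈ (c j).coeff.support, IsSubResExponent β j q) ∧ P = triangularMap a c := by
  constructor
  · rintro ⟨a, c, ha, hc, hP⟩
    refine ⟨a, fun j => ofCoeff (c j), ha, fun j q hq => hc j q (Finsupp.mem_support_iff.1 hq),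
      funext₂ fun z j => ?_⟩
    rw [hP, triangularMap, aeval_apply]
    rfl
  · rintro ⟨a, c, ha, hc, rfl⟩
    refine ⟨a, fun j => (c j).coeff, ha, fun j q hq => hc j q (Finsupp.mem_support_iff.2 hq),
      fun z j => ?_⟩
    rw [triangularMap, aeval_apply]
    rfl

end SubResonantInverse

end SubResonant

open SubResonant in
theorem isSubResonant_inverse_general {n : ℕ} (β : Fin n → ℂ)
    (P : (Fin n → ℂ) → (Fin n → ℂ)) (hP : IsSubResonant β P) :
    Function.Bijective P ∧
      ∃ Q : (Fin n → ℂ) → (Fin n → ℂ), IsSubResonant β Q ∧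
        P ∘ Q = id ∧ Q ∘ P = id := by
  obtain ⟨a, c, ha, hc, rfl⟩ := isSubResonant_iff.1 hP
  have hlow : IsLowerTriangular c := fun j q hq => (hc j q hq).2
  have hPQ := triangularMap_inverseMap ha hlow
  have hQP := inverseMap_triangularMap ha hlow
  have hQ : IsSubResonant β (inverseMap a c) := by
    refine isSubResonant_iff.2 ⟨_, _, fun j => inv_ne_zero (ha j), fun j d hd => ?_,
      inverseMap_eq_triangularMap hlow⟩
    exact isSubResExponent_of_mem_support_aeval
      (isAdmissibleSubst_inversePoly hc) (hc j) (Finsupp.support_smul hd)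
  exact ⟨bijective_iff_has_inverse.2 ⟨_, hQP, hPQ⟩, _, hQ, funext hPQ, funext hQP⟩

/-- every β sub-resonant polynomial transformation is an
invertible map of ℂⁿ whose inverse is again β sub-resonant; hence `G^r_β` is a
subgroup of `Aut(ℂⁿ)`. -/
theorem isSubResonant_inverse {n : ℕ} (β : Fin n → ℂ)
    (h1 : ∀ i, ‖β i‖ < 1)
    (hpos : ∀ i, 0 < ‖β i‖)
    (hmono : ∀ i j : Fin n, i ≤ j → ‖β j‖ ≤ ‖β i‖)
    (P : (Fin n → ℂ) → (Fin n → ℂ)) (hP : IsSubResonant β P) :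
    Function.Bijective P ∧
      ∃ Q : (Fin n → ℂ) → (Fin n → ℂ), IsSubResonant β Q ∧
        P ∘ Q = id ∧ Q ∘ P = id :=
  isSubResonant_inverse_general β P hP
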